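/- Let G be an r-regular Lehman graph with k=1 and r ≥ 3, and let P be a partition of V(G) into copies of K_{r-1,r-1}. Then the compression c(G,P) is an r-regular Lehman graph with k = -1. -/

import Mathlib

open Matrix BigOperators
open scoped Classical

def is01 {m n : Type*} (A : Matrix m n ℤ) : Prop := ∀ i j, A i j = 0 ∨ A i j = 1

/-!
Off its own block every black vertex has exactly one neighbour, so `A = Mb Mwᵀ + P` with block
indicator matrices `Mb`, `Mw` and a permutation matrix `P`, and the compression is
`C = I + Mbᵀ P Mw`. Let `S = Mbᵀ B Mw` count the `B`-edges between blocks. Using `A Bᵀ = J + I`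
and its dual `Aᵀ B = J + I`, one gets `C S = (r-1)² J + C - I`, hence `C B'ᵀ = J - I` for
`B'ᵀ = S - (r-2) J - I`. Read entrywise, `A Bᵀ = J + I` says that every black vertex has at most
one `B`-neighbour in each block and exactly one in its own; together with the dual statement this
makes `C` and `B'` (0,1)-matrices.
-/

open Finset

theorem is01.nonneg {m n : Type*} {A : Matrix m n ℤ} (hA : is01 A) (i : m) (j : n) : 0 ≤ A i j :=
  (hA i j).elim (·.ge) fun h => h ▸ zero_le_one

def allOnes (m n : Type*) : Matrix m n ℤ := Matrix.of fun _ _ => 1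

@[simp]
theorem allOnes_apply {m n : Type*} (i : m) (j : n) : allOnes m n i j = 1 := rfl

@[simp]
theorem transpose_allOnes {m n : Type*} : (allOnes m n)ᵀ = allOnes n m := rfl

theorem mul_allOnes_apply {l m n : Type*} [Fintype m] (M : Matrix l m ℤ) (i : l) (k : n) :
    (M * allOnes m n) i k = ∑ j, M i j := by
  simp [mul_apply]

theorem allOnes_mul_apply {l m n : Type*} [Fintype m] (M : Matrix m n ℤ) (k : l) (j : n) :
    (allOnes l m * M) k j = ∑ i, M i j := by
  simp [mul_apply]

theorem det_allOnes_add_one {n : Type*} [Fintype n] [DecidableEq n] :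
    (allOnes n n + 1).det = Fintype.card n + 1 := by
  have : allOnes n n = replicateCol Unit (1 : n → ℤ) * replicateRow Unit (1 : n → ℤ) := by
    ext i j; simp [mul_apply]
  rw [add_comm, this, det_one_add_replicateCol_mul_replicateRow]
  simp [add_comm]

theorem transpose_mul_eq_allOnes_add_one {n : Type*} [Fintype n] [DecidableEq n]
    {A B : Matrix n n ℤ} (hAB : A * Bᵀ = allOnes n n + 1)
    (hJA : allOnes n n * A = A * allOnes n n) :
    Bᵀ * A = allOnes n n + 1 := by
  have hdet : A.det ≠ 0 := by
    intro h
    have := congrArg det hAB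
    rw [det_mul, h, zero_mul, det_allOnes_add_one] at this
    omega
  have hker : A * (Bᵀ * A - (allOnes n n + 1)) = 0 := by
    rw [mul_sub, ← Matrix.mul_assoc, hAB, add_mul, mul_add, hJA]; simp
  have : A.det • (Bᵀ * A - (allOnes n n + 1)) = 0 := by
    rw [← Matrix.one_mul (Bᵀ * A - _), ← Matrix.smul_mul, ← adjugate_mul, Matrix.mul_assoc, hker,
      Matrix.mul_zero]
  exact sub_eq_zero.mp ((smul_eq_zero.mp this).resolve_left hdet)

theorem transpose_mul_eq_allOnes_add_one_of_regular {V W : Type*} [Fintype V] [Fintype W]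
    [DecidableEq V] [DecidableEq W] (hcard : Fintype.card V = Fintype.card W)
    {A B : Matrix V W ℤ} (hAB : A * Bᵀ = allOnes V V + 1) (r : ℤ)
    (hrow : ∀ b, ∑ w, A b w = r) (hcol : ∀ w, ∑ b, A b w = r) :
    Aᵀ * B = allOnes W W + 1 := by
  rw [← transpose_transpose (Aᵀ * B), Matrix.transpose_mul, transpose_transpose,
    ← transpose_allOnes, ← transpose_one, ← transpose_add]
  congr 1
  let e := Fintype.equivOfCardEq hcard
  have key := transpose_mul_eq_allOnes_add_one (A := A.submatrix id e) (B := B.submatrix id e)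
    (by rw [transpose_submatrix, submatrix_mul_equiv, hAB]; rfl)
    (by ext b b'
        simp [mul_allOnes_apply, allOnes_mul_apply, hcol, Equiv.sum_comp e (A b), hrow])
  ext w w'
  have := congr_fun₂ key (e.symm w) (e.symm w')
  simpa [mul_apply, one_apply, Equiv.sum_comp e.symm] using this

theorem existsUnique_eq_one_of_sum_eq_one {α : Type*} [Fintype α] {g : α → ℤ}
    (hg : ∀ a, g a = 0 ∨ g a = 1) (h : ∑ a, g a = 1) : ∃! a, g a = 1 := by
  have hsum : ∑ a, g a = #{a | g a = 1} := by
    rw [← sum_boole]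
    exact sum_congr rfl fun a _ => by rcases hg a with h | h <;> simp [h]
  obtain ⟨a, ha⟩ := card_eq_one.mp (by omega : #{a | g a = 1} = 1)
  have hmem : ∀ b, g b = 1 ↔ b = a := fun b => by
    simpa using congrArg (b ∈ ·) ha
  exact ⟨a, (hmem a).mpr rfl, fun b hb => (hmem b).mp hb⟩

theorem exists_equiv_toMatrix_eq {V W : Type*} [Fintype V] [Fintype W] [DecidableEq W]
    {D : Matrix V W ℤ} (hD : is01 D) (hrow : ∀ i, ∑ j, D i j = 1) (hcol : ∀ j, ∑ i, D i j = 1) :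
    ∃ e : V ≃ W, e.toPEquiv.toMatrix = D := by
  choose f hf hfu using fun i => existsUnique_eq_one_of_sum_eq_one (hD i) (hrow i)
  choose g hg hgu using fun j => existsUnique_eq_one_of_sum_eq_one (hD · j) (hcol j)
  let e : V ≃ W := ⟨f, g, fun i => (hgu _ i (hf i)).symm, fun j => (hfu _ j (hg j)).symm⟩
  refine ⟨e, ?_⟩
  ext i j
  rw [PEquiv.toMatrix_toPEquiv_apply, Pi.single_apply]
  by_cases hij : j = f i
  · simp [e, hij, hf i]
  · rcases hD i j with h | h
    · simp [e, hij, h]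
    · exact absurd (hfu i j h) hij

section BlockMatrix

variable {V ι κ : Type*} [DecidableEq ι]

def blockMatrix (β : V → ι) : Matrix V ι ℤ := Matrix.of fun v X => if β v = X then 1 else 0

theorem blockMatrix_mul_apply [Fintype ι] (β : V → ι) (N : Matrix ι κ ℤ) (v : V) (Z : κ) :
    (blockMatrix β * N) v Z = N (β v) Z := by
  simp [blockMatrix, mul_apply]

theorem transpose_blockMatrix_mul_apply [Fintype V] (β : V → ι) (N : Matrix V κ ℤ) (X : ι)
    (Z : κ) : ((blockMatrix β)ᵀ * N) X Z = ∑ v with β v = X, N v Z := by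
  simp [blockMatrix, mul_apply, sum_filter]

theorem mul_blockMatrix_apply [Fintype V] (β : V → ι) (N : Matrix κ V ℤ) (k : κ) (X : ι) :
    (N * blockMatrix β) k X = ∑ v with β v = X, N k v := by
  simp [blockMatrix, mul_apply, sum_filter]

theorem blockMatrix_mul_transpose_apply {W : Type*} [Fintype ι] (βb : V → ι) (βw : W → ι)
    (b : V) (w : W) :
    (blockMatrix βb * (blockMatrix βw)ᵀ) b w = if βb b = βw w then 1 else 0 := by
  rw [blockMatrix_mul_apply, transpose_apply]
  simp [blockMatrix, eq_comm]

theorem blockMatrix_mul_allOnes [Fintype ι] (β : V → ι) :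
    blockMatrix β * allOnes ι κ = allOnes V κ := by
  ext v Z; simp [blockMatrix_mul_apply]

theorem transpose_blockMatrix_mul_allOnes [Fintype V] {β : V → ι} {m : ℕ}
    (hβ : ∀ X, #{v | β v = X} = m) :
    (blockMatrix β)ᵀ * allOnes V κ = (m : ℤ) • allOnes ι κ := by
  ext X Z; simp [transpose_blockMatrix_mul_apply, hβ]

theorem allOnes_mul_blockMatrix [Fintype V] {β : V → ι} {m : ℕ}
    (hβ : ∀ X, #{v | β v = X} = m) :
    allOnes κ V * blockMatrix β = (m : ℤ) • allOnes κ ι := by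
  ext k X; simp [allOnes_mul_apply, blockMatrix, sum_boole, hβ]

end BlockMatrix

theorem exists_equiv_eq_blockMatrix_add {V W ι : Type*} [Fintype V] [Fintype W] [Fintype ι]
    [DecidableEq W] [DecidableEq ι] {βb : V → ι} {βw : W → ι} {m : ℕ} {A : Matrix V W ℤ}
    (hA : is01 A) (hrow : ∀ b, ∑ w, A b w = m + 1) (hcol : ∀ w, ∑ b, A b w = m + 1)
    (hblack : ∀ X, #{b | βb b = X} = m) (hwhite : ∀ X, #{w | βw w = X} = m)
    (hcomplete : ∀ b w, βb b = βw w → A b w = 1) :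
    ∃ e : V ≃ W, A = blockMatrix βb * (blockMatrix βw)ᵀ + e.toPEquiv.toMatrix := by
  obtain ⟨e, he⟩ := exists_equiv_toMatrix_eq (D := A - blockMatrix βb * (blockMatrix βw)ᵀ)
    (fun b w => by
      rw [Matrix.sub_apply, blockMatrix_mul_transpose_apply]
      split_ifs with hbw
      · simp [hcomplete b w hbw]
      · simpa using hA b w)
    (fun b => by
      have hw : #{w | βb b = βw w} = m := by simpa only [eq_comm] using hwhite (βb b)
      simp [blockMatrix_mul_transpose_apply, sum_sub_distrib, hrow, sum_boole, hw])
    (fun w => by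
      simp [blockMatrix_mul_transpose_apply, sum_sub_distrib, hcol, sum_boole, hblack])
  exact ⟨e, by rw [he]; abel⟩

theorem add_le_sum_of_mem {α : Type*} [DecidableEq α] {s : Finset α} {g : α → ℤ}
    (hg : ∀ a ∈ s, 0 ≤ g a) {a b : α} (ha : a ∈ s) (hb : b ∈ s) (hab : a ≠ b) :
    g a + g b ≤ ∑ x ∈ s, g x := by
  rw [← sum_pair hab]
  exact sum_le_sum_of_subset_of_nonneg (by simp [insert_subset_iff, ha, hb])
    fun x hx _ => hg x hx

section BlockLehman

variable {V W ι : Type*} [Fintype V] [Fintype W] [DecidableEq V] [DecidableEq W] [DecidableEq ι]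

def compress (βb : V → ι) (βw : W → ι) (e : V ≃ W) : Matrix ι ι ℤ :=
  1 + (blockMatrix βb)ᵀ * (e.toPEquiv.toMatrix : Matrix V W ℤ) * blockMatrix βw

def blockCount (βb : V → ι) (βw : W → ι) (B : Matrix V W ℤ) : Matrix ι ι ℤ :=
  (blockMatrix βb)ᵀ * B * blockMatrix βw

def compressPartner (m : ℕ) (βb : V → ι) (βw : W → ι) (B : Matrix V W ℤ) : Matrix ι ι ℤ :=
  (blockCount βb βw B - ((m : ℤ) - 1) • allOnes ι ι - 1)ᵀ

theorem transpose_compress (βb : V → ι) (βw : W → ι) (e : V ≃ W) :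
    (compress βb βw e)ᵀ = compress βw βb e.symm := by
  rw [compress, compress, transpose_add, transpose_one, Matrix.transpose_mul, Matrix.transpose_mul,
    transpose_transpose, ← PEquiv.toMatrix_symm, ← Equiv.toPEquiv_symm, Matrix.mul_assoc]

variable [Fintype ι]

structure IsBlockLehmanPair (m : ℕ) (βb : V → ι) (βw : W → ι) (e : V ≃ W) (A B : Matrix V W ℤ) :
    Prop where
  eq_blockMatrix_add : A = blockMatrix βb * (blockMatrix βw)ᵀ + e.toPEquiv.toMatrix
  mul_transpose : A * Bᵀ = allOnes V V + 1
  transpose_mul : Aᵀ * B = allOnes W W + 1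
  is01_left : is01 A
  is01_right : is01 B
  card_black : ∀ X, #{b | βb b = X} = m
  card_white : ∀ X, #{w | βw w = X} = m
  two_le : 2 ≤ m

namespace IsBlockLehmanPair

variable {m : ℕ} {βb : V → ι} {βw : W → ι} {e : V ≃ W} {A B : Matrix V W ℤ}
  (h : IsBlockLehmanPair m βb βw e A B)
include h

theorem symm : IsBlockLehmanPair m βw βb e.symm Aᵀ Bᵀ where
  eq_blockMatrix_add := by
    rw [h.eq_blockMatrix_add, transpose_add, Matrix.transpose_mul, transpose_transpose,
      Equiv.toPEquiv_symm, PEquiv.toMatrix_symm]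
  mul_transpose := by rw [transpose_transpose, h.transpose_mul]
  transpose_mul := by rw [transpose_transpose, h.mul_transpose]
  is01_left i j := h.is01_left j i
  is01_right i j := h.is01_right j i
  card_black := h.card_white
  card_white := h.card_black
  two_le := h.two_le

theorem apply_eq (b : V) (w : W) :
    A b w = (if βb b = βw w then 1 else 0) + if w = e b then 1 else 0 := by
  rw [h.eq_blockMatrix_add, Matrix.add_apply, blockMatrix_mul_transpose_apply,
    PEquiv.toMatrix_toPEquiv_apply, Pi.single_apply]

theorem apply_eq_one_iff {b : V} {w : W} (hbw : βb b ≠ βw w) : A b w = 1 ↔ w = e b := by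
  rw [h.apply_eq]; split_ifs <;> simp_all

theorem exists_apply_eq_one_iff {X Y : ι} (hXY : X ≠ Y) :
    (∃ b w, βb b = X ∧ βw w = Y ∧ A b w = 1) ↔ ∃ b, βb b = X ∧ βw (e b) = Y := by
  refine ⟨fun ⟨b, w, hb, hw, hbw⟩ => ⟨b, hb, ?_⟩, fun ⟨b, hb, hw⟩ => ⟨b, e b, hb, hw, ?_⟩⟩
  · rwa [← (h.apply_eq_one_iff fun h' => hXY (hb.symm.trans (h'.trans hw))).mp hbw]
  · exact (h.apply_eq_one_iff fun h' => hXY (hb.symm.trans (h'.trans hw))).mpr rfl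

theorem block_apply_ne (b : V) : βw (e b) ≠ βb b := fun hb => by
  have := h.apply_eq b (e b)
  rcases h.is01_left b (e b) with h0 | h0 <;> simp [hb] at this <;> omega

theorem mul_blockMatrix_apply_add_apply (b b' : V) :
    (B * blockMatrix βw) b' (βb b) + B b' (e b) = 1 + if b = b' then 1 else 0 := by
  have := congr_fun₂ h.mul_transpose b b'
  rw [h.eq_blockMatrix_add, Matrix.add_mul, Matrix.add_apply, Matrix.mul_assoc,
    blockMatrix_mul_apply, ← Matrix.transpose_mul,
    PEquiv.toMatrix_toPEquiv_mul] at this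
  simpa [one_apply] using this

theorem exists_ne_and_block_eq (b : V) (X : ι) : ∃ b₀, b₀ ≠ b ∧ βb b₀ = X := by
  obtain ⟨b₀, hb₀, hne⟩ := exists_mem_ne (by rw [h.card_black X]; exact h.two_le) b
  exact ⟨b₀, hne, by simpa using hb₀⟩

theorem mul_blockMatrix_apply_eq_zero_or_one (b : V) (X : ι) :
    (B * blockMatrix βw) b X = 0 ∨ (B * blockMatrix βw) b X = 1 := by
  obtain ⟨b₀, hne, rfl⟩ := h.exists_ne_and_block_eq b X
  have := h.mul_blockMatrix_apply_add_apply b₀ b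
  rcases h.is01_right b (e b₀) with h0 | h0 <;> simp [hne] at this <;> omega

theorem mul_blockMatrix_apply_self (b : V) : (B * blockMatrix βw) b (βb b) = 1 := by
  obtain ⟨b₀, hne, hb₀⟩ := h.exists_ne_and_block_eq b (βb b)
  have h₀ := h.mul_blockMatrix_apply_add_apply b₀ b
  have h₁ := h.mul_blockMatrix_apply_add_apply b b
  rw [hb₀, if_neg hne] at h₀
  rw [if_pos rfl] at h₁
  rcases h.is01_right b (e b₀) with h0 | h0 <;> rcases h.is01_right b (e b) with h1 | h1 <;> omega

theorem block_apply_ne_of_ne {b₁ b₂ : V} (hne : b₁ ≠ b₂) (hX : βb b₁ = βb b₂) :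
    βw (e b₁) ≠ βw (e b₂) := by
  intro hY
  -- a black vertex of the block of `e b₁` sees `e b₁` and `e b₂` alike, hence neither
  have hzero : ∀ b, βb b = βw (e b₁) → B b (e b₁) = 0 := by
    intro b hb
    have hb₁ : b₁ ≠ b := by rintro rfl; exact h.block_apply_ne b₁ hb.symm
    have hb₂ : b₂ ≠ b := by rintro rfl; exact h.block_apply_ne b₁ (hb.symm.trans hX.symm)
    have h₁ := h.mul_blockMatrix_apply_add_apply b₁ b
    have h₂ := h.mul_blockMatrix_apply_add_apply b₂ b
    rw [if_neg hb₁] at h₁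
    rw [if_neg hb₂, ← hX] at h₂
    have hpair := add_le_sum_of_mem (s := {w | βw w = βb b}) (g := B b)
      (fun w _ => h.is01_right.nonneg b w)
      (by simp [hb]) (by simp [hb, hY]) (e.injective.ne hne)
    rw [← mul_blockMatrix_apply, h.mul_blockMatrix_apply_self b] at hpair
    rcases h.is01_right b (e b₁) with h0 | h0 <;> omega
  have := h.symm.mul_blockMatrix_apply_self (e b₁)
  rw [mul_blockMatrix_apply, sum_eq_zero fun b hb => by
    simpa using hzero b (by simpa using hb)] at this
  exact zero_ne_one this

theorem card_mul_blockMatrix_apply_eq_zero_le_one {X Y : ι} (hXY : X ≠ Y) :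
    #{b | βb b = Y ∧ (B * blockMatrix βw) b X = 0} ≤ 1 := by
  rw [card_le_one]
  intro b₁ hb₁ b₂ hb₂
  simp only [mem_filter, mem_univ, true_and] at hb₁ hb₂
  obtain ⟨b₀, -, hb₀⟩ := h.exists_ne_and_block_eq b₁ X
  -- two such vertices would give column `e b₀` of `B` two ones in block `Y`
  have hone : ∀ b, βb b = Y → (B * blockMatrix βw) b X = 0 → B b (e b₀) = 1 := by
    intro b hbY hb0
    have := h.mul_blockMatrix_apply_add_apply b₀ b
    rw [hb₀, hb0, if_neg (by rintro rfl; exact hXY (hb₀.symm.trans hbY))] at this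
    omega
  by_contra hne
  have hpair := add_le_sum_of_mem (s := {b | βb b = Y}) (g := fun b => B b (e b₀))
    (fun b _ => h.is01_right.nonneg b (e b₀))
    (by simp [hb₁.1]) (by simp [hb₂.1]) hne
  have := h.symm.mul_blockMatrix_apply_eq_zero_or_one (e b₀) Y
  simp only [mul_blockMatrix_apply, transpose_apply] at this
  simp only [hone b₁ hb₁.1 hb₁.2, hone b₂ hb₂.1 hb₂.2] at hpair
  omega

theorem compress_apply (X Y : ι) :
    compress βb βw e X Y = if X = Y ∨ ∃ b, βb b = X ∧ βw (e b) = Y then 1 else 0 := by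
  have hcount : ((blockMatrix βb)ᵀ * (e.toPEquiv.toMatrix : Matrix V W ℤ) * blockMatrix βw) X Y =
      #{b | βb b = X ∧ βw (e b) = Y} := by
    rw [Matrix.mul_assoc, transpose_blockMatrix_mul_apply, PEquiv.toMatrix_toPEquiv_mul]
    simp [blockMatrix, sum_boole, filter_filter]
  have hle : #{b | βb b = X ∧ βw (e b) = Y} ≤ 1 := card_le_one.mpr fun b₁ hb₁ b₂ hb₂ => by
    simp only [mem_filter, mem_univ, true_and] at hb₁ hb₂
    by_contra hne
    exact h.block_apply_ne_of_ne hne (hb₁.1.trans hb₂.1.symm) (hb₁.2.trans hb₂.2.symm)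
  rw [compress, Matrix.add_apply, one_apply, hcount]
  by_cases hXY : X = Y
  · subst hXY
    have : #{b | βb b = X ∧ βw (e b) = X} = 0 := card_eq_zero.mpr <| filter_eq_empty_iff.mpr
      fun b _ hb => h.block_apply_ne b (hb.2.trans hb.1.symm)
    simp [this]
  · by_cases hex : ∃ b, βb b = X ∧ βw (e b) = Y
    · obtain ⟨b, hb⟩ := hex
      have : #{b | βb b = X ∧ βw (e b) = Y} = 1 :=
        le_antisymm hle (card_pos.mpr ⟨b, by simpa using hb⟩)
      simp only [hXY, this, false_or, if_pos (⟨b, hb⟩ : ∃ b, βb b = X ∧ βw (e b) = Y)]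
      rfl
    · have : #{b | βb b = X ∧ βw (e b) = Y} = 0 := card_eq_zero.mpr <| filter_eq_empty_iff.mpr
        fun b _ hb => hex ⟨b, hb⟩
      simp [hXY, hex, this]

theorem compress_mul_allOnes :
    compress βb βw e * allOnes ι ι = ((m : ℤ) + 1) • allOnes ι ι := by
  have hP : (e.toPEquiv.toMatrix : Matrix V W ℤ) * allOnes W ι = allOnes V ι := by
    rw [PEquiv.toMatrix_toPEquiv_mul]; rfl
  rw [compress, Matrix.add_mul, Matrix.one_mul, Matrix.mul_assoc, Matrix.mul_assoc,
    blockMatrix_mul_allOnes, hP, transpose_blockMatrix_mul_allOnes h.card_black, add_smul, one_smul,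
    add_comm]

theorem allOnes_mul_compress :
    allOnes ι ι * compress βb βw e = ((m : ℤ) + 1) • allOnes ι ι := by
  rw [← transpose_transpose (allOnes ι ι * _), Matrix.transpose_mul, transpose_compress,
    transpose_allOnes, h.symm.compress_mul_allOnes, transpose_smul, transpose_allOnes]

theorem sum_compress_apply_right (X : ι) : ∑ Y, compress βb βw e X Y = m + 1 := by
  simpa [mul_allOnes_apply] using congr_fun₂ h.compress_mul_allOnes X X

theorem sum_compress_apply_left (Y : ι) : ∑ X, compress βb βw e X Y = m + 1 := by
  simpa [allOnes_mul_apply] using congr_fun₂ h.allOnes_mul_compress Y Y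

theorem blockCount_apply_self (X : ι) : blockCount βb βw B X X = m := by
  rw [blockCount, Matrix.mul_assoc, transpose_blockMatrix_mul_apply,
    sum_congr rfl fun b hb => (by simpa using hb : βb b = X) ▸ h.mul_blockMatrix_apply_self b]
  simp [h.card_black]

theorem blockCount_apply_of_ne {X Y : ι} (hXY : X ≠ Y) :
    blockCount βb βw B Y X = m - 1 ∨ blockCount βb βw B Y X = m := by
  have hsum : blockCount βb βw B Y X =
      (m : ℤ) - #{b | βb b = Y ∧ (B * blockMatrix βw) b X = 0} := by
    rw [blockCount, Matrix.mul_assoc, transpose_blockMatrix_mul_apply]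
    rw [sum_congr rfl fun b _ => (show (B * blockMatrix βw) b X =
      1 - if (B * blockMatrix βw) b X = 0 then 1 else 0 by
        rcases h.mul_blockMatrix_apply_eq_zero_or_one b X with h0 | h0 <;> simp [h0])]
    simp only [sum_sub_distrib, sum_const, sum_boole, filter_filter, h.card_black, nsmul_eq_mul,
      mul_one]
  have := h.card_mul_blockMatrix_apply_eq_zero_le_one hXY
  omega

theorem is01_compressPartner : is01 (compressPartner m βb βw B) := by
  intro X Y
  simp only [compressPartner, transpose_apply, Matrix.sub_apply, Matrix.smul_apply, allOnes_apply,
    one_apply, smul_eq_mul, mul_one]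
  by_cases hXY : X = Y
  · subst hXY
    simp [h.blockCount_apply_self]
  · rcases h.blockCount_apply_of_ne hXY with h0 | h0 <;> simp [h0, Ne.symm hXY]

theorem compress_mul_blockCount :
    compress βb βw e * blockCount βb βw B = (m : ℤ) ^ 2 • allOnes ι ι + compress βb βw e - 1 := by
  set P : Matrix V W ℤ := e.toPEquiv.toMatrix with hP
  have hMM : blockMatrix βw * (blockMatrix βb)ᵀ = Aᵀ - Pᵀ := by
    rw [← transpose_transpose (blockMatrix βw), ← Matrix.transpose_mul, ← transpose_sub,
      eq_sub_of_add_eq h.eq_blockMatrix_add.symm]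
  have hPP : P * Pᵀ = 1 := by
    rw [PEquiv.toMatrix_toPEquiv_mul]; ext; simp [one_apply, P, eq_comm]
  have hPJ : P * allOnes W W = allOnes V W := by
    rw [PEquiv.toMatrix_toPEquiv_mul]; rfl
  calc compress βb βw e * blockCount βb βw B
      = blockCount βb βw B + (blockMatrix βb)ᵀ *
          (P * (blockMatrix βw * (blockMatrix βb)ᵀ) * B) * blockMatrix βw := by
        simp only [compress, blockCount, Matrix.add_mul, Matrix.one_mul, Matrix.mul_assoc, P]
    _ = blockCount βb βw B + (blockMatrix βb)ᵀ * (allOnes V W + P - B) * blockMatrix βw := by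
        rw [hMM, Matrix.mul_sub, Matrix.sub_mul, Matrix.mul_assoc P, h.transpose_mul, hPP,
          Matrix.one_mul, Matrix.mul_add, hPJ, Matrix.mul_one]
    _ = (m : ℤ) ^ 2 • allOnes ι ι + compress βb βw e - 1 := by
        rw [Matrix.mul_sub, Matrix.mul_add, Matrix.sub_mul, Matrix.add_mul,
          transpose_blockMatrix_mul_allOnes h.card_black, Matrix.smul_mul,
          allOnes_mul_blockMatrix h.card_white, smul_smul, compress, blockCount, ← hP, sq]
        abel

theorem compress_mul_transpose_compressPartner :
    compress βb βw e * (compressPartner m βb βw B)ᵀ = allOnes ι ι - 1 := by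
  rw [compressPartner, transpose_transpose, Matrix.mul_sub, Matrix.mul_sub,
    h.compress_mul_blockCount, Matrix.mul_smul, h.compress_mul_allOnes, Matrix.mul_one, smul_smul]
  module

end IsBlockLehmanPair

theorem IsBlockLehmanPair.exists_of_regular {βb : V → ι} {βw : W → ι} {m : ℕ}
    {A B : Matrix V W ℤ} (hA : is01 A) (hB : is01 B) (hAB : A * Bᵀ = allOnes V V + 1)
    (hm : 2 ≤ m) (hrow : ∀ b, ∑ w, A b w = m + 1) (hcol : ∀ w, ∑ b, A b w = m + 1)
    (hblack : ∀ X, #{b | βb b = X} = m) (hwhite : ∀ X, #{w | βw w = X} = m)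
    (hcomplete : ∀ b w, βb b = βw w → A b w = 1) :
    ∃ e, IsBlockLehmanPair m βb βw e A B := by
  obtain ⟨e, he⟩ := exists_equiv_eq_blockMatrix_add hA hrow hcol hblack hwhite hcomplete
  exact ⟨e, he, hAB, transpose_mul_eq_allOnes_add_one_of_regular (Fintype.card_congr e) hAB _
    hrow hcol, hA, hB, hblack, hwhite, hm⟩

end BlockLehman

/-- Compressing each biclique of a partition of an r-regular Lehman graph with k = 1
yields an r-regular Lehman graph with k = -1. -/
theorem stmt9 {V W ι : Type*} [Fintype V] [Fintype W] [Fintype ι]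
    [DecidableEq V] [DecidableEq W] [DecidableEq ι]
    (A : Matrix V W ℤ) (hA : is01 A) (r : ℕ) (hr : 3 ≤ r)
    (hrow : ∀ b, ∑ w, A b w = r) (hcol : ∀ w, ∑ b, A b w = r)
    (B : Matrix V W ℤ) (hB : is01 B)
    (hAB : A * Bᵀ = Matrix.of (fun _ _ => (1 : ℤ)) + 1)
    (βb : V → ι) (βw : W → ι)
    (hblack : ∀ i, ({b | βb b = i} : Set V).ncard = r - 1)
    (hwhite : ∀ i, ({w | βw w = i} : Set W).ncard = r - 1)
    (hcomplete : ∀ b w, βb b = βw w → A b w = 1)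
    -- the bipartite adjacency matrix of the compressed graph c(G,P)
    (A' : Matrix ι ι ℤ)
    (hA' : ∀ X Y, A' X Y =
      if X = Y ∨ ∃ b w, βb b = X ∧ βw w = Y ∧ A b w = 1 then 1 else 0) :
    is01 A' ∧ (∀ X, ∑ Y, A' X Y = r) ∧ (∀ Y, ∑ X, A' X Y = r) ∧
    ∃ B' : Matrix ι ι ℤ, is01 B' ∧
      A' * B'ᵀ = Matrix.of (fun _ _ => (1 : ℤ)) - 1 := by
  have hr' : (r : ℤ) = (r - 1 : ℕ) + 1 := by omega
  have hblack' : ∀ X, #{b | βb b = X} = r - 1 := fun X => by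
    rw [← hblack X, Set.ncard_eq_toFinset_card', Set.toFinset_ofPred]
  have hwhite' : ∀ X, #{w | βw w = X} = r - 1 := fun X => by
    rw [← hwhite X, Set.ncard_eq_toFinset_card', Set.toFinset_ofPred]
  obtain ⟨e, h⟩ := IsBlockLehmanPair.exists_of_regular hA hB hAB (by omega) (hr' ▸ hrow)
    (hr' ▸ hcol) hblack' hwhite' hcomplete
  have hA'eq : A' = compress βb βw e := by
    ext X Y
    rw [hA', h.compress_apply]
    by_cases hXY : X = Y
    · simp [hXY]
    · simp only [hXY, false_or, h.exists_apply_eq_one_iff hXY]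
  subst hA'eq
  refine ⟨fun X Y => ?_, fun X => ?_, fun Y => ?_, compressPartner (r - 1) βb βw B,
    h.is01_compressPartner, h.compress_mul_transpose_compressPartner⟩
  · rw [h.compress_apply]; split_ifs <;> simp
  · rw [h.sum_compress_apply_right, hr']
  · rw [h.sum_compress_apply_left, hr']
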